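/- Fix λ, k, h > 0 and integers M ≥ 1, and let aⱼ = u⁺ⁿ۪ʲ, bⱼ = u⁻ⁿ۪ʲ, fⱼ (j = 0,…,M+1) be real grid values at time level n satisfying the no-flux conditions a₀ = b₀ and a_{M+1} = b_{M+1}, and f₀ = f_{M+1} = 0. Define the time-(n+1) values by: u⁻ⁿ⁺¹۪ʲ = (1−λk/h−k/4)bⱼ + (kλ/h−k/4)b_{j+1} + (k/4)(aⱼ + a_{j+1}) − (k/(4λ))(f_{j+1} + fⱼ) for j = 0,…,M; u⁺ⁿ⁺¹۪ʲ = (1−λk/h−k/4)aⱼ + (kλ/h−k/4)a_{j−1} + (k/4)(bⱼ + b_{j−1}) + (k/(4λ))(f_{j−1} + fⱼ) for j = 1,…,M+1; and the boundary closures u⁺ⁿ⁺¹۪⁰ := u⁻ⁿ⁺¹۪⁰ and u⁻ⁿ⁺¹۪^{M+1} := u⁺ⁿ⁺¹۪^{M+1}. Then the trapezoidal discrete mass Iⁿ = h( (a₀+b₀)/2 + ∑_{j=1}^{M}(aⱼ+bⱼ) + (a_{M+1}+b_{M+1})/2 ) is exactly conserved: Iⁿ⁺¹ = Iⁿ. 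-/

import Mathlib

/-!
The update of `u = u⁺ + u⁻` is in conservation form: at every interior node the change is
`Φ (j - 1) - Φ j` for an explicit interface flux `Φ`, and thanks to `u⁺ = u⁻` and `f = 0` at
the ends, each boundary half-cell changes only by the flux through its inner interface.
The fluxes then telescope in the trapezoidal sum.
-/

open Finset

def trapezoidSum {K : Type*} [DivisionRing K] (M : ℕ) (u : ℕ → K) : K :=
  u 0 / 2 + ∑ j ∈ Icc 1 M, u j + u (M + 1) / 2

lemma sum_Icc_one_eq_sum_range_succ {G : Type*} [AddCommMonoid G] (M : ℕ) (u : ℕ → G) :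
    ∑ j ∈ Icc 1 M, u j = ∑ j ∈ range M, u (j + 1) := by
  rw [← Ico_add_one_right_eq_Icc, sum_Ico_eq_sum_range, Nat.add_sub_cancel]
  simp only [add_comm 1]

theorem trapezoidSum_eq_of_flux_form {K : Type*} [DivisionRing K] (M : ℕ) (u u' Φ : ℕ → K)
    (h_left : u' 0 / 2 = u 0 / 2 - Φ 0)
    (h_interior : ∀ j < M, u' (j + 1) = u (j + 1) + Φ j - Φ (j + 1))
    (h_right : u' (M + 1) / 2 = u (M + 1) / 2 + Φ M) :
    trapezoidSum M u' = trapezoidSum M u := by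
  have h_sum : ∑ j ∈ Icc 1 M, u' j = ∑ j ∈ Icc 1 M, u j + (Φ 0 - Φ M) := by
    simp only [sum_Icc_one_eq_sum_range_succ]
    rw [← sum_range_sub', ← sum_add_distrib]
    refine sum_congr rfl fun j hj => ?_
    rw [h_interior j (mem_range.mp hj), add_sub_assoc]
  rw [trapezoidSum, trapezoidSum, h_left, h_sum, h_right]
  abel

open Finset in
theorem stmt9_general (lam k h : ℝ) (M : ℕ) (a b f na nb : ℕ → ℝ)
    (hbd0 : a 0 = b 0) (hbdM : a (M + 1) = b (M + 1))
    (hf0 : f 0 = 0) (hfM : f (M + 1) = 0)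
    (hnb : ∀ j ≤ M, nb j = (1 - lam * k / h - k / 4) * b j + (k * lam / h - k / 4) * b (j + 1)
        + (k / 4) * (a j + a (j + 1)) - (k / (4 * lam)) * (f (j + 1) + f j))
    (hna : ∀ j, 1 ≤ j → j ≤ M + 1 →
      na j = (1 - lam * k / h - k / 4) * a j + (k * lam / h - k / 4) * a (j - 1)
        + (k / 4) * (b j + b (j - 1)) + (k / (4 * lam)) * (f (j - 1) + f j))
    (hna0 : na 0 = nb 0) (hnbM : nb (M + 1) = na (M + 1)) :
    h * ((na 0 + nb 0) / 2 + (∑ j ∈ Finset.Icc 1 M, (na j + nb j))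
        + (na (M + 1) + nb (M + 1)) / 2)
      = h * ((a 0 + b 0) / 2 + (∑ j ∈ Finset.Icc 1 M, (a j + b j))
        + (a (M + 1) + b (M + 1)) / 2) := by
  let Φ : ℕ → ℝ := fun j => lam * k / h * (a j - b (j + 1)) - k / 4 * (a (j + 1) + a j)
    + k / 4 * (b j + b (j + 1)) + k / (4 * lam) * (f j + f (j + 1))
  have h_left : (na 0 + nb 0) / 2 = (a 0 + b 0) / 2 - Φ 0 := by
    rw [hna0, hnb 0 (Nat.zero_le M)]
    simp only [Φ, hbd0, hf0]
    ring
  have h_interior :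
      ∀ j < M, na (j + 1) + nb (j + 1) = a (j + 1) + b (j + 1) + Φ j - Φ (j + 1) := by
    intro j hj
    rw [hna (j + 1) (Nat.le_add_left 1 j) (by omega), hnb (j + 1) hj, Nat.add_sub_cancel]
    simp only [Φ]
    ring
  have h_right : (na (M + 1) + nb (M + 1)) / 2 = (a (M + 1) + b (M + 1)) / 2 + Φ M := by
    rw [hnbM, hna (M + 1) (Nat.le_add_left 1 M) le_rfl, Nat.add_sub_cancel]
    simp only [Φ, ← hbdM, hfM]
    ring
  exact congrArg (h * ·)
    (trapezoidSum_eq_of_flux_form M (a + b) (na + nb) Φ h_left h_interior h_right)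

open Finset in
/-- Exact conservation of the trapezoidal discrete mass for the second-order AHO
scheme on a single arc with no-flux boundary conditions `u⁺ = u⁻` at both ends
and vanishing boundary source values. Here `a j = u⁺ⁿ۪ʲ`, `b j = u⁻ⁿ۪ʲ`, and
`na, nb` are the time-`(n+1)` values. -/
theorem stmt9 (lam k h : ℝ) (hlam : 0 < lam) (hk : 0 < k) (hh : 0 < h)
    (M : ℕ) (hM : 1 ≤ M) (a b f na nb : ℕ → ℝ)
    (hbd0 : a 0 = b 0) (hbdM : a (M + 1) = b (M + 1))
    (hf0 : f 0 = 0) (hfM : f (M + 1) = 0)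
    (hnb : ∀ j ≤ M, nb j = (1 - lam * k / h - k / 4) * b j + (k * lam / h - k / 4) * b (j + 1)
        + (k / 4) * (a j + a (j + 1)) - (k / (4 * lam)) * (f (j + 1) + f j))
    (hna : ∀ j, 1 ≤ j → j ≤ M + 1 →
      na j = (1 - lam * k / h - k / 4) * a j + (k * lam / h - k / 4) * a (j - 1)
        + (k / 4) * (b j + b (j - 1)) + (k / (4 * lam)) * (f (j - 1) + f j))
    (hna0 : na 0 = nb 0) (hnbM : nb (M + 1) = na (M + 1)) :
    h * ((na 0 + nb 0) / 2 + (∑ j ∈ Finset.Icc 1 M, (na j + nb j))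
        + (na (M + 1) + nb (M + 1)) / 2)
      = h * ((a 0 + b 0) / 2 + (∑ j ∈ Finset.Icc 1 M, (a j + b j))
        + (a (M + 1) + b (M + 1)) / 2) :=
  stmt9_general lam k h M a b f na nb hbd0 hbdM hf0 hfM hnb hna hna0 hnbM
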